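/- For 0 < x < n let s_n(x) := -Φ⁻¹(x/n). Fix 0 < δ < M < ∞ and B ∈ [0,∞). For x ∈ [δ,M] and β ∈ [0,B], set s := s_n(x) and t := -Φ⁻¹( x(1 + β/s²)/n ). Then, as n → ∞, the supremum over (x,β) ∈ [δ,M]×[0,B] of | s³(s − t) − β | tends to 0. -/

import Mathlib

open Filter Set

/-- The standard normal cumulative distribution function
`Φ(t) = ∫_{-∞}^t e^{-z²/2}/√(2π) dz`. -/
noncomputable def stdNormalCDF (t : ℝ) : ℝ :=
  ∫ z in Set.Iic t, Real.exp (-z ^ 2 / 2) / Real.sqrt (2 * Real.pi)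

/-- The inverse function `Φ⁻¹ : (0,1) → ℝ` of the standard normal CDF. -/
noncomputable def stdNormalCDFInv : ℝ → ℝ :=
  Function.invFun stdNormalCDF

noncomputable def phiPDF (z : ℝ) : ℝ := Real.exp (-z ^ 2 / 2) / Real.sqrt (2 * Real.pi)

lemma sqrt_two_pi_pos : 0 < Real.sqrt (2 * Real.pi) := by
  positivity

lemma phiPDF_pos (z : ℝ) : 0 < phiPDF z := by
  unfold phiPDF; positivity

lemma phiPDF_cont : Continuous phiPDF := by
  unfold phiPDF
  fun_prop

lemma phiPDF_eq (z : ℝ) : phiPDF z = Real.exp (-(1/2) * z ^ 2) / Real.sqrt (2 * Real.pi) := by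
  unfold phiPDF; ring_nf

lemma phiPDF_integrable : MeasureTheory.Integrable phiPDF := by
  have h := (integrable_exp_neg_mul_sq (by norm_num : (0:ℝ) < 1/2)).div_const (Real.sqrt (2 * Real.pi))
  apply h.congr
  filter_upwards with z
  rw [phiPDF_eq]

lemma phiPDF_even (z : ℝ) : phiPDF (-z) = phiPDF z := by
  unfold phiPDF; rw [neg_pow]; norm_num

lemma hasDerivAt_exp_neg_sq (z : ℝ) :
    HasDerivAt (fun z : ℝ => Real.exp (-z ^ 2 / 2)) (-z * Real.exp (-z ^ 2 / 2)) z := by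
  have h : HasDerivAt (fun z : ℝ => -z ^ 2 / 2) (-z) z := by
    have := ((hasDerivAt_pow 2 z).neg).div_const 2
    refine this.congr_deriv ?_
    ring
  simpa [mul_comm] using h.exp

lemma hasDerivAt_neg_phiPDF (z : ℝ) :
    HasDerivAt (fun z : ℝ => -phiPDF z) (z * phiPDF z) z := by
  have := ((hasDerivAt_exp_neg_sq z).div_const (Real.sqrt (2 * Real.pi))).neg
  refine this.congr_deriv ?_
  unfold phiPDF; ring

lemma tendsto_phiPDF_atTop : Tendsto phiPDF atTop (nhds 0) := by
  have h1 : Tendsto (fun z : ℝ => -z ^ 2 / 2) atTop atBot := by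
    apply Filter.Tendsto.atBot_div_const (by norm_num : (0:ℝ) < 2)
    exact tendsto_neg_atTop_atBot.comp (tendsto_pow_atTop (two_ne_zero))
  have h2 : Tendsto (fun z : ℝ => Real.exp (-z ^ 2 / 2)) atTop (nhds 0) :=
    Real.tendsto_exp_atBot.comp h1
  have := h2.div_const (Real.sqrt (2 * Real.pi))
  unfold phiPDF; convert this using 2; ring

lemma integral_mul_phiPDF_Ioi (s : ℝ) (hs : 0 ≤ s) :
    ∫ z in Ioi s, z * phiPDF z = phiPDF s := by
  have h := MeasureTheory.integral_Ioi_of_hasDerivAt_of_nonneg' (a := s)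
      (g := fun z : ℝ => -phiPDF z) (g' := fun z : ℝ => z * phiPDF z) (l := 0)
      (fun x _ => hasDerivAt_neg_phiPDF x)
      (fun x hx => mul_nonneg (hs.trans (le_of_lt hx)) (phiPDF_pos x).le)
      (by simpa using tendsto_phiPDF_atTop.neg)
  simpa using h

lemma hasDerivAt_millsAux {z : ℝ} (hz : z ≠ 0) :
    HasDerivAt (fun z : ℝ => -(phiPDF z * (1 / z - 1 / z ^ 3)))
      ((1 - 3 / z ^ 4) * phiPDF z) z := by
  have hphi : HasDerivAt phiPDF (-z * phiPDF z) z := by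
    have := (hasDerivAt_exp_neg_sq z).div_const (Real.sqrt (2 * Real.pi))
    refine this.congr_deriv ?_
    unfold phiPDF; ring
  have hinner : HasDerivAt (fun z : ℝ => 1 / z - 1 / z ^ 3)
      (-(1 / z ^ 2) + 3 / z ^ 4) z := by
    have h1 : HasDerivAt (fun z : ℝ => 1 / z) (-(1 / z ^ 2)) z := by
      simpa using (hasDerivAt_inv hz)
    have h2 : HasDerivAt (fun z : ℝ => 1 / z ^ 3) (-(3 / z ^ 4)) z := by
      have h := (hasDerivAt_pow 3 z).inv (pow_ne_zero 3 hz)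
      simp only [one_div]
      refine h.congr_deriv ?_
      field_simp
      ring
    exact (h1.sub h2).congr_deriv (by ring)
  have := (hphi.mul hinner).neg
  refine this.congr_deriv ?_
  have h4 : z ^ 4 ≠ 0 := pow_ne_zero 4 hz
  field_simp
  ring

lemma integral_millsAux (s : ℝ) (hs : 2 ≤ s) :
    ∫ z in Ioi s, (1 - 3 / z ^ 4) * phiPDF z = phiPDF s * (1 / s - 1 / s ^ 3) := by
  have hs0 : 0 < s := lt_of_lt_of_le (by norm_num) hs
  have h := MeasureTheory.integral_Ioi_of_hasDerivAt_of_nonneg' (a := s)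
      (g := fun z : ℝ => -(phiPDF z * (1 / z - 1 / z ^ 3)))
      (g' := fun z : ℝ => (1 - 3 / z ^ 4) * phiPDF z) (l := 0)
      (fun x hx => hasDerivAt_millsAux (ne_of_gt (lt_of_lt_of_le hs0 hx)))
      ?_ ?_
  · simpa using h
  · intro x hx
    have hx2 : (2:ℝ) ≤ x := hs.trans (le_of_lt hx)
    have h16 : (2:ℝ) ^ 4 ≤ x ^ 4 := pow_le_pow_left₀ (by norm_num) hx2 4
    have : 3 / x ^ 4 ≤ 1 := by
      rw [div_le_one (by positivity)]
      norm_num at h16 ⊢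
      linarith
    exact mul_nonneg (by linarith) (phiPDF_pos x).le
  · have a1 : Tendsto (fun z : ℝ => 1 / z) atTop (nhds 0) := by
      simpa [one_div] using (tendsto_inv_atTop_zero (𝕜 := ℝ))
    have a3 : Tendsto (fun z : ℝ => 1 / z ^ 3) atTop (nhds 0) := by
      simpa [one_div, Function.comp_def] using
        (tendsto_inv_atTop_zero (𝕜 := ℝ)).comp (tendsto_pow_atTop (n := 3) (by norm_num))
    have h1 : Tendsto (fun z : ℝ => 1 / z - 1 / z ^ 3) atTop (nhds 0) := by
      simpa using a1.sub a3
    have := (tendsto_phiPDF_atTop.mul h1).neg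
    simpa using this

lemma stdNormalCDF_eq_integral (t : ℝ) : stdNormalCDF t = ∫ z in Iic t, phiPDF z := rfl

lemma stdNormalCDF_neg_eq_tail (s : ℝ) :
    stdNormalCDF (-s) = ∫ z in Ioi s, phiPDF z := by
  rw [stdNormalCDF_eq_integral]
  have h1 : ∫ z in Iic (-s), phiPDF z = ∫ z in Iic (-s), phiPDF (-z) := by
    congr 1; funext z; rw [phiPDF_even]
  rw [h1, integral_comp_neg_Iic, neg_neg]

lemma mills_upper {s : ℝ} (hs : 0 < s) : stdNormalCDF (-s) ≤ phiPDF s / s := by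
  rw [stdNormalCDF_neg_eq_tail]
  have hle : ∫ z in Ioi s, phiPDF z ≤ ∫ z in Ioi s, z * phiPDF z / s := by
    apply MeasureTheory.setIntegral_mono_on
    · exact phiPDF_integrable.integrableOn
    · have : MeasureTheory.Integrable (fun z : ℝ => z * phiPDF z) := by
        have h := (integrable_mul_exp_neg_mul_sq (by norm_num : (0:ℝ) < 1/2)).div_const
          (Real.sqrt (2 * Real.pi))
        apply h.congr
        filter_upwards with z
        rw [phiPDF_eq]; ring
      exact (this.div_const s).integrableOn
    · exact measurableSet_Ioi
    · intro z hz
      rw [le_div_iff₀ hs]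
      have h := mul_le_mul_of_nonneg_left (le_of_lt (show s < z from hz)) (phiPDF_pos z).le
      nlinarith [h]
  calc ∫ z in Ioi s, phiPDF z ≤ ∫ z in Ioi s, z * phiPDF z / s := hle
    _ = (∫ z in Ioi s, z * phiPDF z) / s := by rw [MeasureTheory.integral_div]
    _ = phiPDF s / s := by rw [integral_mul_phiPDF_Ioi s hs.le]

lemma mills_lower {s : ℝ} (hs : 2 ≤ s) :
    phiPDF s * (1 / s - 1 / s ^ 3) ≤ stdNormalCDF (-s) := by
  rw [stdNormalCDF_neg_eq_tail, ← integral_millsAux s hs]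
  apply MeasureTheory.setIntegral_mono_on
  · have hs0 : 0 < s := lt_of_lt_of_le (by norm_num) hs
    have hderiv := fun (x : ℝ) (hx : x ∈ Ici s) =>
      hasDerivAt_millsAux (ne_of_gt (lt_of_lt_of_le hs0 hx))
    apply MeasureTheory.integrableOn_Ioi_deriv_of_nonneg' hderiv
    · intro x hx
      have hx2 : (2:ℝ) ≤ x := hs.trans (le_of_lt hx)
      have h16 : (2:ℝ) ^ 4 ≤ x ^ 4 := pow_le_pow_left₀ (by norm_num) hx2 4
      have : 3 / x ^ 4 ≤ 1 := by
        rw [div_le_one (by positivity)]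
        norm_num at h16 ⊢
        linarith
      exact mul_nonneg (by linarith) (phiPDF_pos x).le
    · have a1 : Tendsto (fun z : ℝ => 1 / z) atTop (nhds 0) := by
        simpa [one_div] using (tendsto_inv_atTop_zero (𝕜 := ℝ))
      have a3 : Tendsto (fun z : ℝ => 1 / z ^ 3) atTop (nhds 0) := by
        simpa [one_div, Function.comp_def] using
          (tendsto_inv_atTop_zero (𝕜 := ℝ)).comp (tendsto_pow_atTop (n := 3) (by norm_num))
      have h1 : Tendsto (fun z : ℝ => 1 / z - 1 / z ^ 3) atTop (nhds 0) := by
        simpa using a1.sub a3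
      have := (tendsto_phiPDF_atTop.mul h1).neg
      simpa using this
  · exact phiPDF_integrable.integrableOn
  · exact measurableSet_Ioi
  · intro z hz
    have : 3 / z ^ 4 ≤ 1 → (1 - 3 / z ^ 4) * phiPDF z ≤ phiPDF z := by
      intro h
      nlinarith [(phiPDF_pos z).le, (div_nonneg (by norm_num : (0:ℝ) ≤ 3)
        (by positivity : (0:ℝ) ≤ z ^ 4))]
    apply this
    have hz2 : (2:ℝ) ≤ z := hs.trans (le_of_lt hz)
    have h16 : (2:ℝ) ^ 4 ≤ z ^ 4 := pow_le_pow_left₀ (by norm_num) hz2 4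
    rw [div_le_one (by positivity)]
    norm_num at h16 ⊢
    linarith

lemma stdNormalCDF_sub (a t : ℝ) :
    stdNormalCDF t = stdNormalCDF a + ∫ x in a..t, phiPDF x := by
  have h := intervalIntegral.integral_Iic_sub_Iic (μ := MeasureTheory.volume)
    (f := phiPDF) (a := a) (b := t)
    phiPDF_integrable.integrableOn phiPDF_integrable.integrableOn
  rw [stdNormalCDF_eq_integral, stdNormalCDF_eq_integral]
  linarith [h]

lemma hasDerivAt_stdNormalCDF (t : ℝ) : HasDerivAt stdNormalCDF (phiPDF t) t := by
  have h : HasDerivAt (fun u => stdNormalCDF 0 + ∫ x in (0:ℝ)..u, phiPDF x) (phiPDF t) t := by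
    apply HasDerivAt.const_add
    apply intervalIntegral.integral_hasDerivAt_right
    · exact phiPDF_integrable.intervalIntegrable
    · exact phiPDF_cont.stronglyMeasurableAtFilter _ _
    · exact phiPDF_cont.continuousAt
  have heq : (fun u => stdNormalCDF 0 + ∫ x in (0:ℝ)..u, phiPDF x) = stdNormalCDF := by
    funext u; rw [← stdNormalCDF_sub]
  rwa [heq] at h

lemma stdNormalCDF_strictMono : StrictMono stdNormalCDF := by
  apply strictMono_of_deriv_pos
  intro x
  rw [(hasDerivAt_stdNormalCDF x).deriv]
  exact phiPDF_pos x

lemma stdNormalCDF_continuous : Continuous stdNormalCDF :=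
  continuous_iff_continuousAt.mpr fun t => (hasDerivAt_stdNormalCDF t).continuousAt

lemma stdNormalCDF_pos (t : ℝ) : 0 < stdNormalCDF t := by
  rw [stdNormalCDF_eq_integral]
  rw [MeasureTheory.setIntegral_pos_iff_support_of_nonneg_ae]
  · have hsupp : Function.support phiPDF = Set.univ := by
      ext z; simp [Function.support, (phiPDF_pos z).ne']
    rw [hsupp, Set.univ_inter]
    simp [Real.volume_Iic]
  · filter_upwards with z using (phiPDF_pos z).le
  · exact phiPDF_integrable.integrableOn

lemma sqrt_two_pi_ge_two : (2:ℝ) ≤ Real.sqrt (2 * Real.pi) := by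
  have h4 : (4:ℝ) ≤ 2 * Real.pi := by nlinarith [Real.pi_gt_three]
  have hle : Real.sqrt 4 ≤ Real.sqrt (2 * Real.pi) := Real.sqrt_le_sqrt h4
  have h2 : Real.sqrt 4 = 2 := by
    rw [show (4:ℝ) = 2 ^ 2 by norm_num, Real.sqrt_sq (by norm_num : (0:ℝ) ≤ 2)]
  linarith

lemma phiPDF_le (z : ℝ) : phiPDF z ≤ 1 / 2 := by
  unfold phiPDF
  have h1 : Real.exp (-z ^ 2 / 2) ≤ 1 := by
    rw [Real.exp_le_one_iff]
    nlinarith [sq_nonneg z]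
  calc Real.exp (-z ^ 2 / 2) / Real.sqrt (2 * Real.pi) ≤ 1 / Real.sqrt (2 * Real.pi) := by
        gcongr
    _ ≤ 1 / 2 := by
        apply one_div_le_one_div_of_le (by norm_num) sqrt_two_pi_ge_two

lemma exists_stdNormalCDF_eq {y : ℝ} (h0 : 0 < y) (h1 : y < stdNormalCDF 0) :
    ∃ t, stdNormalCDF t = y := by
  set s : ℝ := max 1 (1 / y) with hs
  have hs1 : (1:ℝ) ≤ s := le_max_left _ _
  have hs0 : 0 < s := lt_of_lt_of_le one_pos hs1
  have hsy : 1 / y ≤ s := le_max_right _ _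
  have htail : stdNormalCDF (-s) ≤ y / 2 := by
    calc stdNormalCDF (-s) ≤ phiPDF s / s := mills_upper hs0
      _ ≤ (1 / 2) / s := by
          gcongr
          exact phiPDF_le s
      _ ≤ y / 2 := by
          rw [div_le_div_iff₀ hs0 (by norm_num : (0:ℝ) < 2)]
          have hys : 1 ≤ s * y := by
            rw [← div_le_iff₀ h0]
            exact hsy
          nlinarith
  have hmem : y ∈ Icc (stdNormalCDF (-s)) (stdNormalCDF 0) :=
    ⟨htail.trans (by linarith), h1.le⟩
  have hIVT := intermediate_value_Icc (by linarith : (-s : ℝ) ≤ 0)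
    stdNormalCDF_continuous.continuousOn
  obtain ⟨t, _, ht⟩ := hIVT hmem
  exact ⟨t, ht⟩

lemma stdNormalCDF_invFun_eq {y : ℝ} (h0 : 0 < y) (h1 : y < stdNormalCDF 0) :
    stdNormalCDF (stdNormalCDFInv y) = y :=
  Function.invFun_eq (exists_stdNormalCDF_eq h0 h1)

lemma stdNormalCDFInv_neg {y : ℝ} (h0 : 0 < y) (h1 : y < stdNormalCDF 0) :
    stdNormalCDFInv y < 0 := by
  have := stdNormalCDF_invFun_eq h0 h1
  have h := stdNormalCDF_strictMono.lt_iff_lt (a := stdNormalCDFInv y) (b := 0)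
  rw [this] at h
  exact h.mp h1

lemma expo_aux {s q : ℝ} : -(s - q) ^ 2 / 2 ≤ -s ^ 2 / 2 + s * q := by
  nlinarith [sq_nonneg q]

lemma phiPDF_anti {a b : ℝ} (ha : 0 ≤ a) (hab : a ≤ b) : phiPDF b ≤ phiPDF a := by
  have h : Real.exp (-b ^ 2 / 2) ≤ Real.exp (-a ^ 2 / 2) := by
    apply Real.exp_le_exp.mpr
    nlinarith
  unfold phiPDF
  gcongr

/-- The lower-tail quantile scale `s_n(x) = -Φ⁻¹(x/n)`, defined for `0 < x < n`. -/
noncomputable def sQ (n : ℕ) (x : ℝ) : ℝ :=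
  -stdNormalCDFInv (x / n)

set_option maxHeartbeats 1600000 in
/-- Boundary scaling of the quantile gap: with `s = s_n(x)` and
`t = -Φ⁻¹(x(1+β/s²)/n)`, `s³(s−t) → β` uniformly on `[δ,M]×[0,B]`. -/
theorem quantile_gap_boundary_scaling (δ M B : ℝ)
    (hδ : 0 < δ) (hM : δ < M) (hB : 0 ≤ B) :
    ∀ ε : ℝ, 0 < ε → ∃ N : ℕ, ∀ n : ℕ, N ≤ n →
      ∀ x ∈ Set.Icc δ M, ∀ β ∈ Set.Icc (0 : ℝ) B,
        |(sQ n x) ^ 3 *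
            (sQ n x - (-stdNormalCDFInv (x * (1 + β / (sQ n x) ^ 2) / n))) - β| < ε := by
  intro ε hε
  -- choose the threshold scale s₀
  set s₀ : ℝ := max (B + 2) (Real.sqrt (B * (1 + B) / ε) + 1) with hs₀def
  have hs₀B : B + 2 ≤ s₀ := le_max_left _ _
  have hs₀2 : (2:ℝ) ≤ s₀ := by linarith
  have hs₀pos : (0:ℝ) < s₀ := by linarith
  have hs₀eps : B * (1 + B) / s₀ ^ 2 < ε := by
    rcases eq_or_lt_of_le hB with hB0 | hB0
    · rw [← hB0]; simpa using hε
    · have hC : 0 < B * (1 + B) := by nlinarith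
      have h1 : Real.sqrt (B * (1 + B) / ε) < s₀ :=
        lt_of_lt_of_le (lt_add_one _) (le_max_right _ _)
      have hsq := Real.sq_sqrt (le_of_lt (div_pos hC hε))
      have h2 : B * (1 + B) / ε < s₀ ^ 2 := by
        nlinarith [Real.sqrt_nonneg (B * (1 + B) / ε)]
      rw [div_lt_iff₀ hε] at h2
      rw [div_lt_iff₀ (by positivity)]
      linarith
  -- choose N
  set c : ℝ := min (stdNormalCDF 0 / 2) (stdNormalCDF (-s₀)) with hcdef
  have hc : 0 < c := lt_min (by linarith [stdNormalCDF_pos 0]) (stdNormalCDF_pos (-s₀))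
  obtain ⟨N, hN⟩ := exists_nat_gt (M * (1 + B) / c)
  refine ⟨N, fun n hn x hx β hβ => ?_⟩
  have hM0 : 0 < M := lt_trans hδ hM
  have hNpos : 0 < (N:ℝ) := lt_trans (by positivity) hN
  have hnpos : 0 < (n:ℝ) := lt_of_lt_of_le hNpos (by exact_mod_cast hn)
  have hMn : M * (1 + B) / n < c := by
    rw [div_lt_iff₀ hnpos]
    have h1 : M * (1 + B) < N * c := by
      rw [div_lt_iff₀ hc] at hN; exact hN
    have h2 : (N:ℝ) * c ≤ n * c := by
      apply mul_le_mul_of_nonneg_right _ hc.le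
      exact_mod_cast hn
    linarith
  obtain ⟨hxδ, hxM⟩ := hx
  obtain ⟨hβ0, hβB⟩ := hβ
  set u : ℝ := x / n with hudef
  have hu0 : 0 < u := div_pos (lt_of_lt_of_le hδ hxδ) hnpos
  have huM : u ≤ M / n := by
    rw [hudef]; gcongr
  have hMB : M / n ≤ M * (1 + B) / n := by
    gcongr
    calc M = M * 1 := (mul_one M).symm
      _ ≤ M * (1 + B) := by gcongr <;> linarith
  have hu_lt_c : u < c := lt_of_le_of_lt (huM.trans hMB) hMn
  have hu_lt : u < stdNormalCDF 0 := by
    have := min_le_left (stdNormalCDF 0 / 2) (stdNormalCDF (-s₀))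
    have h0 := stdNormalCDF_pos 0
    rw [hcdef] at hu_lt_c
    calc u < min (stdNormalCDF 0 / 2) (stdNormalCDF (-s₀)) := hu_lt_c
      _ ≤ stdNormalCDF 0 / 2 := min_le_left _ _
      _ < stdNormalCDF 0 := by linarith
  have hΦψu : stdNormalCDF (stdNormalCDFInv u) = u := stdNormalCDF_invFun_eq hu0 hu_lt
  set s : ℝ := sQ n x with hsdef
  have hs_eq : -s = stdNormalCDFInv u := by rw [hsdef]; simp [sQ, hudef]
  have hΦs : stdNormalCDF (-s) = u := by rw [hs_eq]; exact hΦψu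
  have hs_pos : 0 < s := by
    have := stdNormalCDFInv_neg hu0 hu_lt
    rw [← hs_eq] at this; linarith
  have hs_ge : s₀ ≤ s := by
    have h1 : u < stdNormalCDF (-s₀) :=
      lt_of_lt_of_le hu_lt_c (min_le_right _ _)
    rw [← hΦs] at h1
    have := stdNormalCDF_strictMono.lt_iff_lt.mp h1
    linarith
  have hs2 : (2:ℝ) ≤ s := hs₀2.trans hs_ge
  have hsB : B ≤ s := by linarith
  have hs1 : (1:ℝ) ≤ s := by linarith
  have hsQeq : -stdNormalCDFInv (x / ↑n) = s := by rw [hsdef]; rfl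
  clear_value s
  clear_value u
  -- the case β = 0
  rcases eq_or_lt_of_le hβ0 with hβz | hβpos
  · rw [← hβz]
    have hv_eq : x * (1 + 0 / s ^ 2) / n = x / n := by rw [zero_div]; ring
    rw [hv_eq]
    rw [hsQeq]
    simpa using hε
  -- the case β > 0
  set v : ℝ := x * (1 + β / s ^ 2) / n with hvdef
  have hv_eq : v = u * (1 + β / s ^ 2) := by rw [hvdef, hudef]; ring
  have hβs : 0 < β / s ^ 2 := div_pos hβpos (by positivity)
  have hv_gt : u < v := by
    rw [hv_eq]
    nth_rewrite 1 [← mul_one u]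
    exact mul_lt_mul_of_pos_left (by linarith) hu0
  have hv_le : v ≤ M * (1 + B) / n := by
    rw [hv_eq, hudef]
    have h1 : β / s ^ 2 ≤ B := by
      calc β / s ^ 2 ≤ β / 1 ^ 2 := by gcongr
        _ = β := by norm_num
        _ ≤ B := hβB
    calc x / n * (1 + β / s ^ 2) ≤ M / n * (1 + B) := by
          apply mul_le_mul (by gcongr) (by linarith) (by positivity) (by positivity)
      _ = M * (1 + B) / n := by ring
  have hv_lt : v < stdNormalCDF 0 := by
    have h1 : v < c := lt_of_le_of_lt hv_le hMn
    rw [hcdef] at h1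
    have h0 := stdNormalCDF_pos 0
    calc v < min (stdNormalCDF 0 / 2) (stdNormalCDF (-s₀)) := h1
      _ ≤ stdNormalCDF 0 / 2 := min_le_left _ _
      _ < stdNormalCDF 0 := by linarith
  have hv0 : 0 < v := lt_trans hu0 hv_gt
  have hΦψv : stdNormalCDF (stdNormalCDFInv v) = v := stdNormalCDF_invFun_eq hv0 hv_lt
  set t : ℝ := -stdNormalCDFInv v with htdef
  have hΦt : stdNormalCDF (-t) = v := by rw [htdef, neg_neg]; exact hΦψv
  have ht_pos : 0 < t := by
    have := stdNormalCDFInv_neg hv0 hv_lt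
    rw [htdef]; linarith
  have hts : t < s := by
    have h1 : stdNormalCDF (-s) < stdNormalCDF (-t) := by rw [hΦs, hΦt]; exact hv_gt
    have := stdNormalCDF_strictMono.lt_iff_lt.mp h1
    linarith
  clear_value t
  clear_value v
  -- mean value theorem
  obtain ⟨cc, hcc_mem, hcc_eq⟩ := exists_hasDerivAt_eq_slope stdNormalCDF phiPDF
    (by linarith : -s < -t) stdNormalCDF_continuous.continuousOn
    (fun y _ => hasDerivAt_stdNormalCDF y)
  set ξ : ℝ := -cc with hξdef
  have hξt : t < ξ := by
    have := hcc_mem.2; rw [hξdef]; linarith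
  have hξs : ξ < s := by
    have := hcc_mem.1; rw [hξdef]; linarith
  have hφcc : phiPDF cc = phiPDF ξ := by
    rw [hξdef, phiPDF_even]
  clear_value ξ
  have hst_pos : 0 < s - t := by linarith
  have hMVT : phiPDF ξ * (s - t) = u * β / s ^ 2 := by
    rw [← hφcc]
    rw [hΦt, hΦs] at hcc_eq
    have hne : s - t ≠ 0 := ne_of_gt hst_pos
    have h1 : phiPDF cc * (s - t) = v - u := by
      rw [hcc_eq, show -t - -s = s - t by ring, div_mul_cancel₀ _ hne]
    rw [h1, hv_eq]
    ring
  have hφξ_pos : 0 < phiPDF ξ := phiPDF_pos ξ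
  have hs_ne : s ≠ 0 := ne_of_gt hs_pos
  -- the key identity
  have key : s ^ 3 * (s - t) = β * (s * u / phiPDF ξ) := by
    have hMVT'' : u * β = phiPDF ξ * (s - t) * s ^ 2 :=
      (div_eq_iff (pow_ne_zero 2 hs_ne)).mp hMVT.symm
    rw [show β * (s * u / phiPDF ξ) = β * (s * u) / phiPDF ξ by ring,
      eq_div_iff (ne_of_gt hφξ_pos)]
    linear_combination (-s) * hMVT''
  set R : ℝ := s * u / phiPDF ξ with hRdef
  have hR_nonneg : 0 ≤ R := by positivity
  -- Mills bounds
  have hmu : u ≤ phiPDF s / s := by rw [← hΦs]; exact mills_upper hs_pos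
  have hml : phiPDF s * (1 / s - 1 / s ^ 3) ≤ u := by rw [← hΦs]; exact mills_lower hs2
  have hφsξ : phiPDF s ≤ phiPDF ξ := phiPDF_anti (by linarith) hξs.le
  have hR_le : R ≤ 1 := by
    rw [hRdef, div_le_one hφξ_pos]
    calc s * u ≤ s * (phiPDF s / s) := by gcongr
      _ = phiPDF s := by field_simp
      _ ≤ phiPDF ξ := hφsξ
  -- bound on s - t
  have hst_le : s - t ≤ B / s ^ 3 := by
    have h1 : s ^ 3 * (s - t) ≤ B := by
      rw [key]
      calc β * R ≤ B * 1 := by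
            apply mul_le_mul hβB hR_le hR_nonneg hB
        _ = B := by ring
    rw [le_div_iff₀ (by positivity : (0:ℝ) < s ^ 3)]
    linarith [h1, mul_comm (s - t) (s ^ 3)]
  have hq_le : B / s ^ 3 ≤ s := by
    calc B / s ^ 3 ≤ s / 1 := by
          apply div_le_div₀ hs_pos.le hsB (by norm_num) (one_le_pow₀ hs1)
      _ = s := by ring
  have ha_nonneg : 0 ≤ s - B / s ^ 3 := by linarith
  have hξa : s - B / s ^ 3 ≤ ξ := by linarith
  have hφξa : phiPDF ξ ≤ phiPDF (s - B / s ^ 3) := phiPDF_anti ha_nonneg hξa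
  -- exponential bound
  have hexp : phiPDF (s - B / s ^ 3) ≤ phiPDF s * Real.exp (B / s ^ 2) := by
    unfold phiPDF
    rw [div_mul_eq_mul_div, ← Real.exp_add]
    have hexpo : -(s - B / s ^ 3) ^ 2 / 2 ≤ -s ^ 2 / 2 + B / s ^ 2 := by
      have hsq : B / s ^ 2 = s * (B / s ^ 3) := by field_simp
      rw [hsq]
      exact expo_aux
    gcongr
  have hφξ_le : phiPDF ξ ≤ phiPDF s * Real.exp (B / s ^ 2) := hφξa.trans hexp
  -- lower bound on R
  have hsu_ge : phiPDF s * (1 - 1 / s ^ 2) ≤ s * u := by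
    calc phiPDF s * (1 - 1 / s ^ 2) = s * (phiPDF s * (1 / s - 1 / s ^ 3)) := by
          field_simp
      _ ≤ s * u := by gcongr
  have hfs_pos : 0 < phiPDF s := phiPDF_pos s
  have hE_pos : 0 < Real.exp (B / s ^ 2) := Real.exp_pos _
  have h1s : 0 ≤ 1 - 1 / s ^ 2 := by
    have : 1 / s ^ 2 ≤ 1 := by
      rw [div_le_one (by positivity)]
      exact one_le_pow₀ hs1
    linarith
  have hR_ge : 1 - (1 + B) / s ^ 2 ≤ R := by
    have step1 : (phiPDF s * (1 - 1 / s ^ 2)) / (phiPDF s * Real.exp (B / s ^ 2)) ≤ R := by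
      rw [hRdef]
      apply div_le_div₀ (by positivity) hsu_ge hφξ_pos hφξ_le
    have step2 : (phiPDF s * (1 - 1 / s ^ 2)) / (phiPDF s * Real.exp (B / s ^ 2))
        = (1 - 1 / s ^ 2) * Real.exp (-(B / s ^ 2)) := by
      rw [Real.exp_neg]
      field_simp
    have step3 : (1 - 1 / s ^ 2) * (1 - B / s ^ 2)
        ≤ (1 - 1 / s ^ 2) * Real.exp (-(B / s ^ 2)) := by
      apply mul_le_mul_of_nonneg_left _ h1s
      have := Real.add_one_le_exp (-(B / s ^ 2))
      linarith
    have step4 : 1 - (1 + B) / s ^ 2 ≤ (1 - 1 / s ^ 2) * (1 - B / s ^ 2) := by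
      have h2 : 0 < s ^ 2 := by positivity
      have h4 : 0 < s ^ 4 := by positivity
      have e1 : (1 - 1 / s ^ 2) * (1 - B / s ^ 2)
          = 1 - (1 + B) / s ^ 2 + B / s ^ 4 := by
        field_simp; ring
      rw [e1]
      have : 0 ≤ B / s ^ 4 := by positivity
      linarith
    calc 1 - (1 + B) / s ^ 2 ≤ (1 - 1 / s ^ 2) * (1 - B / s ^ 2) := step4
      _ ≤ (1 - 1 / s ^ 2) * Real.exp (-(B / s ^ 2)) := step3
      _ = (phiPDF s * (1 - 1 / s ^ 2)) / (phiPDF s * Real.exp (B / s ^ 2)) := step2.symm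
      _ ≤ R := step1
  -- conclude
  rw [key]
  have habs : |β * R - β| = β * (1 - R) := by
    have hle : β * R ≤ β * 1 := mul_le_mul_of_nonneg_left hR_le hβ0
    rw [abs_of_nonpos (by linarith)]
    ring
  rw [habs]
  have hfinal : β * (1 - R) ≤ B * ((1 + B) / s ^ 2) := by
    apply mul_le_mul hβB _ (by linarith) hB
    · linarith
  calc β * (1 - R) ≤ B * ((1 + B) / s ^ 2) := hfinal
    _ ≤ B * ((1 + B) / s₀ ^ 2) := by gcongr <;> linarith
    _ = B * (1 + B) / s₀ ^ 2 := by ring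
    _ < ε := hs₀eps
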